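/- Let T be a minimum spanning tree of a finite connected edge-weighted graph G = (V,E,w) with strictly positive weights, let E_δ be a set of δ new edges with strictly positive weights and E ∩ E_δ = ∅, and let G_δ = (V, E ∪ E_δ, w') where w' extends w. Let i ∈ {1,…,δ−1} and let x^i ⊆ T ∪ E_δ with |(T ∪ E_δ) \ x^i| = i be such that (V, x^i) is connected and x^i has minimum total weight among all edge sets F ⊆ E ∪ E_δ with (V,F) connected and symmetric difference of F and T ∪ E_δ of size exactly i. Let e be an edge of maximum weight in x^i whose removal leaves (V, x^i \ {e}) connected. Then x^{i+1} := x^i \ {e} has minimum total weight among all edge sets F ⊆ E ∪ E_δ such that (V,F) is connected and the symmetric difference of F and T ∪ E_δ has size exactly i+1. -/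

import Mathlib

/-! ## Spanning trees and minimum spanning trees of edge-weighted graphs

Graphs on a finite vertex type `V` are given by finite sets of (non-loop)
unordered edges `Finset (Sym2 V)`; an edge set `F` spans the graph
`SimpleGraph.fromEdgeSet ↑F` on `V`. -/

open SimpleGraph

variable {V : Type*} [Fintype V] [DecidableEq V]

/-- `F` is a spanning tree (of whatever graph contains its edges): the graph
`(V, F)` is connected and acyclic. -/
def IsSpanningTree (F : Finset (Sym2 V)) : Prop :=
  (SimpleGraph.fromEdgeSet (F : Set (Sym2 V))).Connected ∧
    (SimpleGraph.fromEdgeSet (F : Set (Sym2 V))).IsAcyclic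

/-- The total weight `w(F) = Σ_{e ∈ F} w(e)` of an edge set. -/
def edgeWeight (w : Sym2 V → ℝ) (F : Finset (Sym2 V)) : ℝ := ∑ e ∈ F, w e

/-- `T` is a minimum spanning tree of the graph with edge set `E` and edge
weights `w`. -/
def IsMST (E : Finset (Sym2 V)) (w : Sym2 V → ℝ) (T : Finset (Sym2 V)) : Prop :=
  T ⊆ E ∧ IsSpanningTree T ∧
    ∀ T' : Finset (Sym2 V), T' ⊆ E → IsSpanningTree T' → edgeWeight w T ≤ edgeWeight w T'


/-!
Write `S = T ∪ E_δ`. By the exchange property of the minimum spanning tree `T`, a connected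
`F ⊆ E ∪ E_δ` can trade its edges of `E \ T` one at a time for edges of `T` (or drop them), ending
at a connected `F' ⊆ S` that is no heavier than `F` and misses no more edges of `S`, hence at most
`i + 1`. If `|F'| ≥ |x^i|`, then `F'` has a connected subset of exactly `|x^i|` edges, a competitor
of `x^i` at distance `i`. Otherwise `|F'| = |x^i| - 1`, and counting connected components shows
that some edge `h ∈ x^i \ F'` can be removed from `x^i` keeping it connected; then `F' ∪ {h}` is a
competitor at distance `i`, and `w(h) ≤ w(e)` by the choice of `e`.
-/

open Finset

namespace SimpleGraph

variable {α : Type*} {G H : SimpleGraph α} {a b u v x y : α}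

lemma fromEdgeSet_insert (A : Set (Sym2 α)) (u v : α) :
    fromEdgeSet (insert s(u, v) A) = fromEdgeSet A ⊔ edge u v := by
  rw [Set.insert_eq, fromEdgeSet_union, sup_comm, edge]

lemma reachable_sup_edge (G : SimpleGraph α) (u v : α) : (G ⊔ edge u v).Reachable u v := by
  obtain rfl | huv := eq_or_ne u v
  · rfl
  · exact Adj.reachable (by simp [edge_adj, huv])

lemma Reachable.elim_sup_edge (h : (G ⊔ edge u v).Reachable x y) :
    G.Reachable x y ∨ (G.Reachable x u ∧ G.Reachable v y) ∨
      (G.Reachable x v ∧ G.Reachable u y) := by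
  obtain ⟨p⟩ := h
  induction p with
  | nil => exact Or.inl .rfl
  | @cons x z y hadj p ih =>
    rw [sup_adj, edge_adj] at hadj
    rcases hadj with hadj | ⟨⟨rfl, rfl⟩ | ⟨rfl, rfl⟩, -⟩
    · have hxz := hadj.reachable
      rcases ih with h | ⟨h₁, h₂⟩ | ⟨h₁, h₂⟩
      exacts [Or.inl (hxz.trans h), Or.inr (Or.inl ⟨hxz.trans h₁, h₂⟩),
        Or.inr (Or.inr ⟨hxz.trans h₁, h₂⟩)]
    · rcases ih with h | ⟨h₁, h₂⟩ | ⟨-, h₂⟩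
      exacts [Or.inr (Or.inl ⟨.rfl, h⟩), Or.inl (h₁.symm.trans h₂), Or.inl h₂]
    · rcases ih with h | ⟨-, h₂⟩ | ⟨h₁, h₂⟩
      exacts [Or.inr (Or.inr ⟨.rfl, h⟩), Or.inl h₂, Or.inl (h₁.symm.trans h₂)]

lemma Connected.of_sup_edge_of_le (h : (G ⊔ edge u v).Connected) (hle : G ≤ H)
    (huv : H.Reachable u v) : H.Connected := by
  refine connected_iff _ |>.mpr ⟨fun x y => ?_, h.nonempty⟩
  rcases (h.preconnected x y).elim_sup_edge with hxy | ⟨hxu, hvy⟩ | ⟨hxv, huy⟩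
  · exact hxy.mono hle
  · exact ((hxu.mono hle).trans huv).trans (hvy.mono hle)
  · exact ((hxv.mono hle).trans huv.symm).trans (huy.mono hle)

lemma IsAcyclic.not_reachable_deleteEdges_of_mem_edges (hG : G.IsAcyclic) {p : G.Walk a b}
    (hp : p.IsPath) (he : s(x, y) ∈ p.edges) : ¬(G.deleteEdges {s(x, y)}).Reachable a b := by
  classical
  rw [reachable_deleteEdges_iff_exists_walk]
  rintro ⟨q, hq⟩
  have hqp : q.bypass = p := congrArg Subtype.val
    ((hG.subsingleton_path a b).elim ⟨q.bypass, q.bypass_isPath⟩ ⟨p, hp⟩)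
  exact hq (q.edges_bypass_subset_edges (hqp ▸ he))

lemma card_connectedComponent_le_sup_edge_add_one [Finite α] :
    Nat.card G.ConnectedComponent ≤ Nat.card (G ⊔ edge u v).ConnectedComponent + 1 := by
  set φ := ConnectedComponent.map (Hom.ofLE (le_sup_left : G ≤ G ⊔ edge u v))
  have hinj : Set.InjOn φ (Set.univ \ {G.connectedComponentMk u}) := by
    intro c hc c' hc' hcc
    induction c using ConnectedComponent.ind with | _ x
    induction c' using ConnectedComponent.ind with | _ y
    simp only [Set.mem_sdiff, Set.mem_singleton_iff, ConnectedComponent.eq] at hc hc'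
    rcases (ConnectedComponent.eq.mp hcc).elim_sup_edge with hxy | ⟨hxu, -⟩ | ⟨-, huy⟩
    · exact ConnectedComponent.sound hxy
    · exact absurd hxu hc.2
    · exact absurd huy.symm hc'.2
  have hle := Set.ncard_le_ncard_of_injOn φ (fun _ _ => Set.mem_univ _) hinj
  have hcard := Set.ncard_sdiff_singleton_add_one (Set.mem_univ (G.connectedComponentMk u))
  rw [Set.ncard_univ] at hle hcard
  omega

lemma card_connectedComponent_sup_edge_add_one_le [Finite α] (huv : ¬G.Reachable u v) :
    Nat.card (G ⊔ edge u v).ConnectedComponent + 1 ≤ Nat.card G.ConnectedComponent := by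
  set φ := ConnectedComponent.map (Hom.ofLE (le_sup_left : G ≤ G ⊔ edge u v))
  have hsurj : φ '' (Set.univ \ {G.connectedComponentMk u}) = Set.univ := by
    refine Set.eq_univ_of_forall fun c => ?_
    induction c using ConnectedComponent.ind with | _ z
    by_cases hz : G.connectedComponentMk z = G.connectedComponentMk u
    · refine ⟨G.connectedComponentMk v,
        ⟨trivial, fun hv => huv (ConnectedComponent.exact hv).symm⟩, ?_⟩
      exact ConnectedComponent.sound ((reachable_sup_edge G u v).symm.trans
        ((ConnectedComponent.exact hz).symm.mono le_sup_left))
    · exact ⟨_, ⟨trivial, hz⟩, rfl⟩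
  have hle := Set.ncard_image_le (f := φ) (s := Set.univ \ {G.connectedComponentMk u})
  have hcard := Set.ncard_sdiff_singleton_add_one (Set.mem_univ (G.connectedComponentMk u))
  rw [hsurj, Set.ncard_univ] at hle
  rw [Set.ncard_univ] at hcard
  omega

end SimpleGraph

section EdgeSets

variable {α : Type*}

noncomputable def numComponents (A : Finset (Sym2 α)) : ℕ :=
  Nat.card (fromEdgeSet (A : Set (Sym2 α))).ConnectedComponent

lemma numComponents_eq_one {A : Finset (Sym2 α)}
    (hA : (fromEdgeSet (A : Set (Sym2 α))).Connected) : numComponents A = 1 :=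
  Nat.card_eq_one_iff_unique.mpr
    ⟨hA.preconnected.subsingleton_connectedComponent, ⟨.mk _ hA.nonempty.some⟩⟩

lemma edgeWeight_mono {w : Sym2 α → ℝ} {A B : Finset (Sym2 α)} (hAB : A ⊆ B)
    (hw : ∀ e ∈ B, 0 ≤ w e) : edgeWeight w A ≤ edgeWeight w B :=
  sum_le_sum_of_subset_of_nonneg hAB fun e he _ => hw e he

variable [DecidableEq α]

lemma edgeWeight_insert {w : Sym2 α → ℝ} {A : Finset (Sym2 α)} {e : Sym2 α} (he : e ∉ A) :
    edgeWeight w (insert e A) = w e + edgeWeight w A :=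
  sum_insert he

lemma edgeWeight_erase_add {w : Sym2 α → ℝ} {A : Finset (Sym2 α)} {e : Sym2 α} (he : e ∈ A) :
    edgeWeight w (A.erase e) + w e = edgeWeight w A :=
  sum_erase_add _ _ he

lemma fromEdgeSet_coe_erase (A : Finset (Sym2 α)) (e : Sym2 α) :
    fromEdgeSet ((A.erase e : Finset (Sym2 α)) : Set (Sym2 α)) =
      (fromEdgeSet (A : Set (Sym2 α))).deleteEdges {e} := by
  rw [deleteEdges_fromEdgeSet, coe_erase]

lemma fromEdgeSet_coe_eq_erase_sup_edge {A : Finset (Sym2 α)} {u v : α} (h : s(u, v) ∈ A) :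
    fromEdgeSet (A : Set (Sym2 α)) =
      fromEdgeSet ((A.erase s(u, v) : Finset (Sym2 α)) : Set (Sym2 α)) ⊔ edge u v := by
  rw [← fromEdgeSet_insert, ← coe_insert, insert_erase h]

lemma isBridge_of_not_connected_erase {A : Finset (Sym2 α)} {e : Sym2 α}
    (hA : (fromEdgeSet (A : Set (Sym2 α))).Connected)
    (h : ¬(fromEdgeSet ((A.erase e : Finset (Sym2 α)) : Set (Sym2 α))).Connected) :
    (fromEdgeSet (A : Set (Sym2 α))).IsBridge e := by
  induction e using Sym2.ind with | _ u v
  by_contra hb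
  exact h (fromEdgeSet_coe_erase A _ ▸ hA.connected_delete_edge_of_not_isBridge hb)

variable [Finite α]

lemma numComponents_le_union_add_card (A U : Finset (Sym2 α)) :
    numComponents A ≤ numComponents (A ∪ U) + U.card := by
  induction U using Finset.induction_on with
  | empty => simp
  | @insert g U hg ih =>
    induction g using Sym2.ind with | _ u v
    have h := card_connectedComponent_le_sup_edge_add_one
      (G := fromEdgeSet ((A ∪ U : Finset (Sym2 α)) : Set (Sym2 α))) (u := u) (v := v)
    rw [← fromEdgeSet_insert, ← coe_insert, ← union_insert] at h
    rw [card_insert_of_notMem hg]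
    unfold numComponents at *
    omega

lemma numComponents_union_add_card_le {A U : Finset (Sym2 α)} (hAU : Disjoint A U)
    (hU : ∀ g ∈ U, (fromEdgeSet ((A ∪ U : Finset (Sym2 α)) : Set (Sym2 α))).IsBridge g) :
    numComponents (A ∪ U) + U.card ≤ numComponents A := by
  induction U using Finset.induction_on with
  | empty => simp
  | @insert g U hg ih =>
    have hle : fromEdgeSet ((A ∪ U : Finset (Sym2 α)) : Set (Sym2 α)) ≤
        fromEdgeSet ((A ∪ insert g U : Finset (Sym2 α)) : Set (Sym2 α)) :=
      fromEdgeSet_mono (coe_subset.mpr (union_subset_union_right (subset_insert _ _)))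
    have ih := ih (hAU.mono_right (subset_insert _ _))
      fun g' hg' => (hU g' (mem_insert_of_mem hg')).anti hle
    induction g using Sym2.ind with | _ u v
    have hbridge := hU _ (mem_insert_self _ _)
    rw [union_insert, coe_insert, fromEdgeSet_insert, isBridge_sup_edge] at hbridge
    have hnadj : ¬(fromEdgeSet ((A ∪ U : Finset (Sym2 α)) : Set (Sym2 α))).Adj u v := by
      rw [fromEdgeSet_adj, mem_coe, mem_union]
      exact fun ⟨h, _⟩ => h.elim (disjoint_left.mp hAU · (mem_insert_self _ _)) hg
    have h := card_connectedComponent_sup_edge_add_one_le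
      (mt hbridge.reachable_iff_adj.mp hnadj)
    rw [← fromEdgeSet_insert, ← coe_insert, ← union_insert] at h
    rw [card_insert_of_notMem hg]
    unfold numComponents at *
    omega

end EdgeSets

section Removal

variable {α : Type*} [DecidableEq α] [Finite α]

lemma exists_connected_erase_of_card_lt {X Y : Finset (Sym2 α)}
    (hX : (fromEdgeSet (X : Set (Sym2 α))).Connected)
    (hY : (fromEdgeSet (Y : Set (Sym2 α))).Connected) (hcard : Y.card < X.card) :
    ∃ g ∈ X, g ∉ Y ∧ (fromEdgeSet ((X.erase g : Finset (Sym2 α)) : Set (Sym2 α))).Connected := by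
  by_contra! hcon
  have hX' : X ∩ Y ∪ X \ Y = X := by rw [union_comm, sdiff_union_inter]
  have hY' : X ∩ Y ∪ Y \ X = Y := by rw [inter_comm, union_comm, sdiff_union_inter]
  -- every edge of `X \ Y` is a bridge of `X`, so deleting them splits `X` into `1 + |X \ Y|`
  -- components, which `Y \ X` must reconnect
  have hsplit := numComponents_union_add_card_le (disjoint_sdiff_inter X Y).symm
    fun g hg => hX'.symm ▸ isBridge_of_not_connected_erase hX
      (hcon g (mem_sdiff.mp hg).1 (mem_sdiff.mp hg).2)
  have hjoin := numComponents_le_union_add_card (X ∩ Y) (Y \ X)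
  rw [hX', numComponents_eq_one hX] at hsplit
  rw [hY', numComponents_eq_one hY] at hjoin
  have := card_inter_add_card_sdiff X Y
  have := card_inter_add_card_sdiff Y X
  rw [inter_comm] at this
  omega

lemma exists_connected_subset_card_eq {X Y : Finset (Sym2 α)}
    (hX : (fromEdgeSet (X : Set (Sym2 α))).Connected)
    (hY : (fromEdgeSet (Y : Set (Sym2 α))).Connected) {m : ℕ} (hYm : Y.card ≤ m)
    (hmX : m ≤ X.card) :
    ∃ X' ⊆ X, (fromEdgeSet (X' : Set (Sym2 α))).Connected ∧ X'.card = m := by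
  obtain hm | hm := hmX.eq_or_lt
  · exact ⟨X, subset_rfl, hX, hm.symm⟩
  obtain ⟨g, hgX, -, hconn⟩ := exists_connected_erase_of_card_lt hX hY (hYm.trans_lt hm)
  obtain ⟨X', hX'g, hX'⟩ := exists_connected_subset_card_eq hconn hY hYm
    (by rw [card_erase_of_mem hgX]; omega)
  exact ⟨X', hX'g.trans (erase_subset _ _), hX'⟩
termination_by X.card - m
decreasing_by rw [card_erase_of_mem hgX]; omega

end Removal

section Exchange

variable {α : Type*} [DecidableEq α]

lemma IsSpanningTree.insert_erase {T : Finset (Sym2 α)} (hT : IsSpanningTree T) {a b : α}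
    {p : (fromEdgeSet (T : Set (Sym2 α))).Walk a b} (hp : p.IsPath)
    {g : Sym2 α} (hg : g ∈ p.edges) : IsSpanningTree (insert s(a, b) (T.erase g)) := by
  obtain ⟨hconn, hacyc⟩ := hT
  induction g using Sym2.ind with | _ x y
  have hgT : s(x, y) ∈ T := (edgeSet_fromEdgeSet _ ▸ p.edges_subset_edgeSet hg).1
  set Tg := fromEdgeSet ((T.erase s(x, y) : Finset (Sym2 α)) : Set (Sym2 α))
  have hT : fromEdgeSet (T : Set (Sym2 α)) = Tg ⊔ edge x y :=
    fromEdgeSet_coe_eq_erase_sup_edge hgT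
  have hab' : ¬Tg.Reachable a b := by
    rw [show Tg = _ from fromEdgeSet_coe_erase _ _]
    exact hacyc.not_reachable_deleteEdges_of_mem_edges hp hg
  have hxy : (Tg ⊔ edge a b).Reachable x y := by
    have hba := (reachable_sup_edge Tg a b).symm
    rcases (hT ▸ hconn.preconnected a b).elim_sup_edge with h | ⟨hax, hyb⟩ | ⟨hay, hxb⟩
    · exact absurd h hab'
    · exact (hax.symm.mono le_sup_left).trans ((reachable_sup_edge Tg a b).trans
        (hyb.symm.mono le_sup_left))
    · exact (hxb.mono le_sup_left).trans (hba.trans (hay.mono le_sup_left))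
  rw [IsSpanningTree, coe_insert, fromEdgeSet_insert]
  exact ⟨(hT ▸ hconn).of_sup_edge_of_le le_sup_left hxy,
    (hacyc.anti (hT ▸ le_sup_left)).sup_edge_of_not_reachable hab'⟩

lemma exists_mem_edges_connected_insert_erase {F : Finset (Sym2 α)} {a b : α}
    (hF : (fromEdgeSet (F : Set (Sym2 α))).Connected) (hab : s(a, b) ∈ F)
    (hnc : ¬(fromEdgeSet ((F.erase s(a, b) : Finset (Sym2 α)) : Set (Sym2 α))).Connected)
    {H : SimpleGraph α} (p : H.Walk a b) :
    ∃ g ∈ p.edges, g ∉ F.erase s(a, b) ∧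
      (fromEdgeSet ((insert g (F.erase s(a, b)) : Finset (Sym2 α)) : Set (Sym2 α))).Connected := by
  set Ff := fromEdgeSet ((F.erase s(a, b) : Finset (Sym2 α)) : Set (Sym2 α))
  have hFeq : fromEdgeSet (F : Set (Sym2 α)) = Ff ⊔ edge a b :=
    fromEdgeSet_coe_eq_erase_sup_edge hab
  have hnab : ¬Ff.Reachable a b := by
    rw [show Ff = _ from fromEdgeSet_coe_erase _ _, ← isBridge_iff]
    exact isBridge_of_not_connected_erase hF hnc
  obtain ⟨d, hd, hx, hy⟩ : ∃ d ∈ p.darts, Ff.Reachable a d.fst ∧ ¬Ff.Reachable a d.snd :=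
    p.exists_boundary_dart {z | Ff.Reachable a z} .rfl hnab
  have hyb : Ff.Reachable d.snd b := by
    rcases (hFeq ▸ hF.preconnected d.snd a).elim_sup_edge with h | ⟨h, -⟩ | ⟨h, -⟩
    · exact absurd h.symm hy
    · exact absurd h.symm hy
    · exact h
  refine ⟨d.edge, List.mem_map_of_mem hd,
    fun hmem => hy (hx.trans ((fromEdgeSet_adj _).mpr ⟨hmem, d.adj.ne⟩).reachable), ?_⟩
  rw [coe_insert, Dart.edge, fromEdgeSet_insert]
  exact (hFeq ▸ hF).of_sup_edge_of_le le_sup_left ((hx.mono le_sup_left).trans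
    ((reachable_sup_edge Ff _ _).trans (hyb.mono le_sup_left)))

lemma IsMST.exists_exchange {E T F : Finset (Sym2 α)} {w : Sym2 α → ℝ} (hT : IsMST E w T)
    (hF : (fromEdgeSet (F : Set (Sym2 α))).Connected) {f : Sym2 α} (hfF : f ∈ F)
    (hfE : f ∈ E) (hfT : f ∉ T)
    (hnc : ¬(fromEdgeSet ((F.erase f : Finset (Sym2 α)) : Set (Sym2 α))).Connected) :
    ∃ g ∈ T, g ∉ F ∧ w g ≤ w f ∧
      (fromEdgeSet ((insert g (F.erase f) : Finset (Sym2 α)) : Set (Sym2 α))).Connected := by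
  obtain ⟨hTE, hTtree, hTmin⟩ := hT
  induction f using Sym2.ind with | _ a b
  obtain ⟨p, hp⟩ := hTtree.1.exists_isPath a b
  obtain ⟨g, hgp, hgF, hconn⟩ := exists_mem_edges_connected_insert_erase hF hfF hnc p
  have hgT : g ∈ T := (edgeSet_fromEdgeSet _ ▸ p.edges_subset_edgeSet hgp).1
  have hmin := hTmin _ (insert_subset hfE ((erase_subset _ _).trans hTE))
    (hTtree.insert_erase hp hgp)
  rw [edgeWeight_insert fun h => hfT (mem_of_mem_erase h), ← edgeWeight_erase_add hgT] at hmin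
  exact ⟨g, hgT, fun h => hgF (mem_erase.mpr ⟨ne_of_mem_of_not_mem hgT hfT, h⟩), by linarith,
    hconn⟩


lemma IsMST.exists_connected_union_erase {E T F : Finset (Sym2 α)} {w : Sym2 α → ℝ}
    (hT : IsMST E w T) (hF : (fromEdgeSet (F : Set (Sym2 α))).Connected) {f : Sym2 α}
    (hfF : f ∈ F) (hfE : f ∈ E) (hfT : f ∉ T) (hf : 0 ≤ w f) :
    ∃ R ⊆ T, (fromEdgeSet ((R ∪ F.erase f : Finset (Sym2 α)) : Set (Sym2 α))).Connected ∧
      edgeWeight w (R ∪ F.erase f) ≤ edgeWeight w F := by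
  have hFf := edgeWeight_erase_add (w := w) hfF
  by_cases hc : (fromEdgeSet ((F.erase f : Finset (Sym2 α)) : Set (Sym2 α))).Connected
  · exact ⟨∅, empty_subset _, by rwa [empty_union], by rw [empty_union]; linarith⟩
  · obtain ⟨g, hgT, hgF, hgw, hconn⟩ := hT.exists_exchange hF hfF hfE hfT hc
    refine ⟨{g}, singleton_subset_iff.mpr hgT, ?_, ?_⟩ <;> rw [← insert_eq]
    · exact hconn
    · rw [edgeWeight_insert fun h => hgF (mem_of_mem_erase h)]
      linarith

lemma IsMST.exists_connected_subset_union_le {E T D F : Finset (Sym2 α)} {w : Sym2 α → ℝ}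
    (hT : IsMST E w T) (hw : ∀ e ∈ E, 0 ≤ w e) (hFED : F ⊆ E ∪ D)
    (hF : (fromEdgeSet (F : Set (Sym2 α))).Connected) :
    ∃ F' ⊆ T ∪ D, (fromEdgeSet (F' : Set (Sym2 α))).Connected ∧
      edgeWeight w F' ≤ edgeWeight w F ∧ ((T ∪ D) \ F').card ≤ ((T ∪ D) \ F).card := by
  by_cases hFS : F ⊆ T ∪ D
  · exact ⟨F, hFS, hF, le_rfl, le_rfl⟩
  obtain ⟨f, hfF, hfS⟩ := not_subset.mp hFS
  have hfE : f ∈ E := (mem_union.mp (hFED hfF)).resolve_right (hfS <| mem_union_right _ ·)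
  have hfT : f ∉ T := (hfS <| mem_union_left _ ·)
  obtain ⟨R, hRT, hconn, hwR⟩ := hT.exists_connected_union_erase hF hfF hfE hfT (hw f hfE)
  have hRS : R ⊆ T ∪ D := hRT.trans subset_union_left
  have hout : (R ∪ F.erase f) \ (T ∪ D) ⊆ (F \ (T ∪ D)).erase f := by
    intro z; simp only [mem_sdiff, mem_union, mem_erase]; grind
  have hmiss : (T ∪ D) \ (R ∪ F.erase f) ⊆ (T ∪ D) \ F := by
    intro z; simp only [mem_sdiff, mem_union, mem_erase]; grind
  obtain ⟨F', hF'S, hF', hwF', hmissF'⟩ := hT.exists_connected_subset_union_le hw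
    (union_subset (hRT.trans (hT.1.trans subset_union_left)) ((erase_subset _ _).trans hFED))
    hconn
  exact ⟨F', hF'S, hF', hwF'.trans hwR, hmissF'.trans (card_le_card hmiss)⟩
termination_by (F \ (T ∪ D)).card
decreasing_by
  exact (card_le_card hout).trans_lt (card_erase_lt_of_mem (mem_sdiff.mpr ⟨hfF, hfS⟩))

end Exchange

theorem mst_add_edges_greedy_step_general (E Eδ T : Finset (Sym2 V)) (w : Sym2 V → ℝ)
    (hw : ∀ e ∈ E ∪ Eδ, 0 < w e)
    (hT : IsMST E w T)
    (i : ℕ)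
    (xi : Finset (Sym2 V)) (hxi : xi ⊆ T ∪ Eδ) (hxicard : ((T ∪ Eδ) \ xi).card = i)
    (hxiconn : (SimpleGraph.fromEdgeSet (xi : Set (Sym2 V))).Connected)
    (hximin : ∀ F : Finset (Sym2 V), F ⊆ E ∪ Eδ →
      (SimpleGraph.fromEdgeSet (F : Set (Sym2 V))).Connected →
      (symmDiff F (T ∪ Eδ)).card = i → edgeWeight w xi ≤ edgeWeight w F)
    (e : Sym2 V) (he : e ∈ xi)
    (hemax : ∀ g ∈ xi,
      (SimpleGraph.fromEdgeSet ((xi \ {g}) : Set (Sym2 V))).Connected → w g ≤ w e) :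
    ∀ F : Finset (Sym2 V), F ⊆ E ∪ Eδ →
      (SimpleGraph.fromEdgeSet (F : Set (Sym2 V))).Connected →
      (symmDiff F (T ∪ Eδ)).card = i + 1 →
      edgeWeight w (xi \ {e}) ≤ edgeWeight w F := by
  intro F hFED hF hFcard
  have hSED : T ∪ Eδ ⊆ E ∪ Eδ := union_subset_union_left hT.1
  have hwS (g) (hg : g ∈ T ∪ Eδ) : 0 ≤ w g := (hw g (hSED hg)).le
  have hxi_le_of_card_eq (X) (hXS : X ⊆ T ∪ Eδ) (hX : (fromEdgeSet (X : Set (Sym2 V))).Connected)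
      (hcard : X.card = xi.card) : edgeWeight w xi ≤ edgeWeight w X := by
    refine hximin X (hXS.trans hSED) hX ?_
    have := card_sdiff_add_card_eq_card hXS
    have := card_sdiff_add_card_eq_card hxi
    rw [symmDiff_of_le hXS]
    omega
  obtain ⟨F', hF'S, hF', hwF', hmiss⟩ :=
    hT.exists_connected_subset_union_le (fun g hg => (hw g (mem_union_left _ hg)).le) hFED hF
  have hmissF : ((T ∪ Eδ) \ F).card ≤ i + 1 :=
    hFcard ▸ card_le_card (symmDiff_def F (T ∪ Eδ) ▸ le_sup_right)
  have hF'card := card_sdiff_add_card_eq_card hF'S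
  have hxicard' := card_sdiff_add_card_eq_card hxi
  have hwe := edgeWeight_erase_add (w := w) he
  rw [sdiff_singleton_eq_erase]
  obtain hle | hlt := le_or_gt xi.card F'.card
  · obtain ⟨X, hXF', hX, hXcard⟩ := exists_connected_subset_card_eq hF' hxiconn le_rfl hle
    have hxiX := hxi_le_of_card_eq X (hXF'.trans hF'S) hX hXcard
    have hXF'w := edgeWeight_mono hXF' fun g hg => hwS g (hF'S hg)
    have he0 := hwS e (hxi he)
    linarith
  · obtain ⟨g, hgxi, hgF', hconn⟩ := exists_connected_erase_of_card_lt hxiconn hF' hlt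
    have hge : w g ≤ w e := hemax g hgxi (by rwa [← coe_erase])
    have hxig := hxi_le_of_card_eq (insert g F') (insert_subset (hxi hgxi) hF'S)
      (hF'.mono (fromEdgeSet_mono (coe_subset.mpr (subset_insert _ _))))
      (by rw [card_insert_of_notMem hgF']; omega)
    rw [edgeWeight_insert hgF'] at hxig
    linarith

/-- Let `T` be a minimum spanning tree of the finite
connected graph `G = (V,E,w)` with strictly positive weights, `E_δ` a set of
`δ` new edges (`E ∩ E_δ = ∅`, strictly positive weights). Let
`i ∈ {1,…,δ−1}` and let `x^i ⊆ T ∪ E_δ` with `|(T ∪ E_δ) \ x^i| = i` be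
connected and of minimum total weight among all `F ⊆ E ∪ E_δ` with `(V,F)`
connected and `|F ∆ (T ∪ E_δ)| = i`. Let `e` be an edge of maximum weight in
`x^i` whose removal leaves `(V, x^i \ {e})` connected. Then `x^{i+1} := x^i \ {e}`
has minimum total weight among all `F ⊆ E ∪ E_δ` with `(V,F)` connected and
`|F ∆ (T ∪ E_δ)| = i + 1`. -/
theorem mst_add_edges_greedy_step (E Eδ T : Finset (Sym2 V)) (w : Sym2 V → ℝ) (δ : ℕ)
    (hloop : ∀ e ∈ E ∪ Eδ, ¬ e.IsDiag)
    (hw : ∀ e ∈ E ∪ Eδ, 0 < w e)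
    (hconn : (SimpleGraph.fromEdgeSet (E : Set (Sym2 V))).Connected)
    (hT : IsMST E w T)
    (hdisj : Disjoint E Eδ) (hδ : Eδ.card = δ)
    (i : ℕ) (hi1 : 1 ≤ i) (hiδ : i ≤ δ - 1) (hδ1 : 1 ≤ δ)
    (xi : Finset (Sym2 V)) (hxi : xi ⊆ T ∪ Eδ) (hxicard : ((T ∪ Eδ) \ xi).card = i)
    (hxiconn : (SimpleGraph.fromEdgeSet (xi : Set (Sym2 V))).Connected)
    (hximin : ∀ F : Finset (Sym2 V), F ⊆ E ∪ Eδ →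
      (SimpleGraph.fromEdgeSet (F : Set (Sym2 V))).Connected →
      (symmDiff F (T ∪ Eδ)).card = i → edgeWeight w xi ≤ edgeWeight w F)
    (e : Sym2 V) (he : e ∈ xi)
    (heconn : (SimpleGraph.fromEdgeSet ((xi \ {e}) : Set (Sym2 V))).Connected)
    (hemax : ∀ g ∈ xi,
      (SimpleGraph.fromEdgeSet ((xi \ {g}) : Set (Sym2 V))).Connected → w g ≤ w e) :
    ∀ F : Finset (Sym2 V), F ⊆ E ∪ Eδ →
      (SimpleGraph.fromEdgeSet (F : Set (Sym2 V))).Connected →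
      (symmDiff F (T ∪ Eδ)).card = i + 1 →
      edgeWeight w (xi \ {e}) ≤ edgeWeight w F :=
  mst_add_edges_greedy_step_general E Eδ T w hw hT i xi hxi hxicard hxiconn hximin e he hemax
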